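/- Let f(λ,μ) be a nonzero polynomial in ℂ[λ,μ] with f(λ,μ) = −f(μ,λ), whose coefficients f_{ij} satisfy f_{ij}f_{kl} − f_{ik}f_{jl} + f_{jk}f_{il} = 0 for all i, j, k, l. Fix i₀ < j₀ with f_{i₀ j₀} ≠ 0 and define P₁(λ) = Σ_k f_{k, j₀} λ^k and P₂(λ) = −(1/f_{i₀ j₀}) Σ_k f_{k, i₀} λ^k. Suppose a ∈ ℂ[λ] satisfies a(λ) = (a_{i₀}/f_{i₀ j₀})·P₁(λ) + a_{j₀}·P₂(λ) with a_{i₀} = 0 and a_{j₀} ≠ 0. Then a polynomial b ∈ ℂ[λ] satisfies a(λ)b(μ) − a(μ)b(λ) = f(λ,μ) if and only if b(λ) = k·a(λ) − (1/a_{j₀})·P₁(λ) for some k ∈ ℂ. -/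

import Mathlib

/-!
The Plücker relation for the indices (i, j, i₀, j₀) expresses every coefficient f_{ij} through
the columns i₀ and j₀ of the coefficient matrix, so that f(λ,μ) = P₁(λ)P₂(μ) − P₁(μ)P₂(λ).
Since a = a_{j₀}·P₂, the polynomial b₀ = −P₁/a_{j₀} is one solution, and the difference g of any
two solutions satisfies a(λ)g(μ) = a(μ)g(λ); evaluating at a point where a does not vanish shows
that g is a constant multiple of a.
-/

/-- Evaluation of a bivariate polynomial f(λ,μ) at a pair of complex numbers. -/
noncomputable def ev2 (f : MvPolynomial (Fin 2) ℂ) (x y : ℂ) : ℂ :=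
  MvPolynomial.eval ![x, y] f

/-- The coefficient f_{ij} of λ^i μ^j in a bivariate polynomial f(λ,μ). -/
noncomputable def coeff2 (f : MvPolynomial (Fin 2) ℂ) (i j : ℕ) : ℂ :=
  MvPolynomial.coeff (Finsupp.single 0 i + Finsupp.single 1 j) f

open Finset Polynomial

lemma single_add_single_injective : Function.Injective fun p : ℕ × ℕ =>
    Finsupp.single (0 : Fin 2) p.1 + Finsupp.single 1 p.2 := by
  intro p q h
  have h0 := DFunLike.congr_fun h 0
  have h1 := DFunLike.congr_fun h 1
  simp only [Finsupp.add_apply, Finsupp.single_apply] at h0 h1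
  exact Prod.ext (by simpa using h0) (by simpa using h1)

lemma ev2_eq_sum_range (f : MvPolynomial (Fin 2) ℂ) {N : ℕ}
    (hN : ∀ d ∈ f.support, d 0 < N ∧ d 1 < N) (l m : ℂ) :
    ev2 f l m = ∑ i ∈ range N, ∑ j ∈ range N, coeff2 f i j * l ^ i * m ^ j := by
  have hsupp : f.support ⊆ (range N ×ˢ range N).image
      fun p => Finsupp.single (0 : Fin 2) p.1 + Finsupp.single 1 p.2 := fun d hd =>
    mem_image.2 ⟨(d 0, d 1), by simpa using hN d hd, by ext i; fin_cases i <;> simp⟩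
  rw [ev2, MvPolynomial.eval_eq', sum_subset hsupp fun d _ hd => by
      rw [MvPolynomial.notMem_support_iff.1 hd, zero_mul],
    sum_image fun p _ q _ h => single_add_single_injective h, sum_product]
  simp [coeff2, Fin.prod_univ_two, mul_assoc]

section Wedge

variable {K : Type*} [Field K]

def wedge (p q : K[X]) (l m : K) : K := p.eval l * q.eval m - p.eval m * q.eval l

lemma wedge_sub_right (a b c : K[X]) (l m : K) :
    wedge a (b - c) l m = wedge a b l m - wedge a c l m := by
  simp only [wedge, eval_sub]; ring

lemma wedge_C_mul_self (a : K[X]) (k l m : K) : wedge a (C k * a) l m = 0 := by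
  simp only [wedge, eval_mul, eval_C]; ring

lemma exists_eq_C_mul_of_wedge_eq_zero [Infinite K] {a g : K[X]} (ha : a ≠ 0)
    (h : ∀ l m, wedge a g l m = 0) : ∃ k, g = C k * a := by
  obtain ⟨l₀, hl₀⟩ : ∃ l₀, a.eval l₀ ≠ 0 := by
    by_contra! h0
    exact ha (Polynomial.funext fun x => by simp [h0 x])
  refine ⟨g.eval l₀ / a.eval l₀, Polynomial.funext fun m => ?_⟩
  have := h l₀ m
  simp only [wedge] at this
  simp only [eval_mul, eval_C]
  field_simp
  linear_combination this

lemma wedge_eq_wedge_iff [Infinite K] {a : K[X]} (ha : a ≠ 0) (b c : K[X]) :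
    (∀ l m, wedge a b l m = wedge a c l m) ↔ ∃ k, b = C k * a + c := by
  constructor
  · intro h
    obtain ⟨k, hk⟩ := exists_eq_C_mul_of_wedge_eq_zero (g := b - c) ha fun l m => by
      rw [wedge_sub_right, h, sub_self]
    exact ⟨k, by rw [← hk, sub_add_cancel]⟩
  · rintro ⟨k, rfl⟩ l m
    rw [← sub_eq_zero, ← wedge_sub_right, add_sub_cancel_right, wedge_C_mul_self]

end Wedge

lemma ev2_eq_wedge_of_coeff2_eq {f : MvPolynomial (Fin 2) ℂ} {p q : ℂ[X]}
    (h : ∀ i j, coeff2 f i j = p.coeff i * q.coeff j - p.coeff j * q.coeff i) (l m : ℂ) :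
    ev2 f l m = wedge p q l m := by
  set N := f.degreeOf 0 + f.degreeOf 1 + p.natDegree + q.natDegree + 1
  have hN : ∀ d ∈ f.support, d 0 < N ∧ d 1 < N := fun d hd => by
    have := MvPolynomial.monomial_le_degreeOf 0 hd
    have := MvPolynomial.monomial_le_degreeOf 1 hd
    omega
  have hp : p.natDegree < N := by omega
  have hq : q.natDegree < N := by omega
  simp only [ev2_eq_sum_range f hN, wedge, eval_eq_sum_range' hp, eval_eq_sum_range' hq,
    sum_mul_sum]
  conv_rhs => enter [2]; rw [sum_comm]
  simp only [h, ← sum_sub_distrib]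
  refine sum_congr rfl fun i _ => sum_congr rfl fun j _ => by ring

lemma coeff2_eq_of_pluecker {f : MvPolynomial (Fin 2) ℂ} {i₀ j₀ : ℕ}
    (hpluecker : ∀ i j, coeff2 f i j * coeff2 f i₀ j₀ - coeff2 f i i₀ * coeff2 f j j₀
      + coeff2 f j i₀ * coeff2 f i j₀ = 0)
    (hne : coeff2 f i₀ j₀ ≠ 0) {P₁ P₂ : ℂ[X]} (hP₁ : ∀ k, P₁.coeff k = coeff2 f k j₀)
    (hP₂ : ∀ k, P₂.coeff k = -(1 / coeff2 f i₀ j₀) * coeff2 f k i₀) (i j : ℕ) :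
    coeff2 f i j = P₁.coeff i * P₂.coeff j - P₁.coeff j * P₂.coeff i := by
  rw [hP₁, hP₁, hP₂, hP₂]
  field_simp
  linear_combination hpluecker i j

theorem stmt_8_general (f : MvPolynomial (Fin 2) ℂ)
    (hpluecker : ∀ i j k l : ℕ,
      coeff2 f i j * coeff2 f k l - coeff2 f i k * coeff2 f j l
        + coeff2 f j k * coeff2 f i l = 0)
    (i₀ j₀ : ℕ) (hne : coeff2 f i₀ j₀ ≠ 0)
    (P₁ P₂ : Polynomial ℂ)
    (hP₁ : ∀ k : ℕ, P₁.coeff k = coeff2 f k j₀)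
    (hP₂ : ∀ k : ℕ, P₂.coeff k = -(1 / coeff2 f i₀ j₀) * coeff2 f k i₀)
    (a : Polynomial ℂ)
    (ha : a = Polynomial.C (a.coeff i₀ / coeff2 f i₀ j₀) * P₁ + Polynomial.C (a.coeff j₀) * P₂)
    (hai : a.coeff i₀ = 0) (haj : a.coeff j₀ ≠ 0)
    (b : Polynomial ℂ) :
    (∀ l m : ℂ, a.eval l * b.eval m - a.eval m * b.eval l = ev2 f l m) ↔
    (∃ k : ℂ, b = Polynomial.C k * a - Polynomial.C (1 / a.coeff j₀) * P₁) := by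
  have ha0 : a ≠ 0 := fun h => haj (by rw [h, coeff_zero])
  have ha₂ : ∀ x, a.eval x = a.coeff j₀ * P₂.eval x := fun x => by
    simpa [hai] using congrArg (eval x) ha
  have hf : ∀ l m, ev2 f l m = wedge a (-C (1 / a.coeff j₀) * P₁) l m := fun l m => by
    rw [ev2_eq_wedge_of_coeff2_eq
      (coeff2_eq_of_pluecker (fun i j => hpluecker i j i₀ j₀) hne hP₁ hP₂)]
    simp only [wedge, eval_mul, eval_neg, eval_C, ha₂]
    field_simp
    ring
  calc (∀ l m, a.eval l * b.eval m - a.eval m * b.eval l = ev2 f l m)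
      ↔ ∀ l m, wedge a b l m = wedge a (-C (1 / a.coeff j₀) * P₁) l m := by
        simp only [hf, wedge]
    _ ↔ ∃ k, b = C k * a + -C (1 / a.coeff j₀) * P₁ := wedge_eq_wedge_iff ha0 b _
    _ ↔ _ := by simp only [neg_mul, ← sub_eq_add_neg]

/-- in the setting of STATEMENT 6, if a = (a_{i₀}/f_{i₀ j₀})·P₁ + a_{j₀}·P₂
with a_{i₀} = 0 and a_{j₀} ≠ 0, then b solves a(λ)b(μ) − a(μ)b(λ) = f(λ,μ) iff
b = k·a − (1/a_{j₀})·P₁ for some k ∈ ℂ. -/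
theorem stmt_8 (f : MvPolynomial (Fin 2) ℂ) (hf : f ≠ 0)
    (hskew : ∀ l m : ℂ, ev2 f l m = - ev2 f m l)
    (hpluecker : ∀ i j k l : ℕ,
      coeff2 f i j * coeff2 f k l - coeff2 f i k * coeff2 f j l
        + coeff2 f j k * coeff2 f i l = 0)
    (i₀ j₀ : ℕ) (hij : i₀ < j₀) (hne : coeff2 f i₀ j₀ ≠ 0)
    (P₁ P₂ : Polynomial ℂ)
    (hP₁ : ∀ k : ℕ, P₁.coeff k = coeff2 f k j₀)
    (hP₂ : ∀ k : ℕ, P₂.coeff k = -(1 / coeff2 f i₀ j₀) * coeff2 f k i₀)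
    (a : Polynomial ℂ)
    (ha : a = Polynomial.C (a.coeff i₀ / coeff2 f i₀ j₀) * P₁ + Polynomial.C (a.coeff j₀) * P₂)
    (hai : a.coeff i₀ = 0) (haj : a.coeff j₀ ≠ 0)
    (b : Polynomial ℂ) :
    (∀ l m : ℂ, a.eval l * b.eval m - a.eval m * b.eval l = ev2 f l m) ↔
    (∃ k : ℂ, b = Polynomial.C k * a - Polynomial.C (1 / a.coeff j₀) * P₁) :=
  stmt_8_general f hpluecker i₀ j₀ hne P₁ P₂ hP₁ hP₂ a ha hai haj b
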